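/- Let A be a σ-weakly amenable commutative Banach algebra, I a closed ideal of A, E a Banach A-module, and σ ∈ Hom(A) with dense range such that σ(I) ⊆ I. Then every σ-derivation D : I → E vanishes on I⁴ (the span of products of four elements of I). -/

import Mathlib

/-- `σ`-weak amenability of a Banach algebra `B`: every bounded `σ`-derivation
`D : B → B*` into the dual bimodule `B*` (with actions `(b·Λ)(x) = Λ(x b)`,
`(Λ·b)(x) = Λ(b x)`) is `σ`-inner. -/
def SigmaWeaklyAmenable (B : Type u) [NonUnitalNormedRing B] [NormedSpace ℂ B]
    (s : B → B) : Prop :=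
  ∀ D : B →L[ℂ] (B →L[ℂ] ℂ),
    (∀ a b x, D (a * b) x = D a (s b * x) + D b (x * s a)) →
    ∃ Λ : B →L[ℂ] ℂ, ∀ a x, D a x = Λ (x * s a) - Λ (s a * x)

/-!
Fix `u, v ∈ I`. The map `G a = D(a u v) - σ(a u)·D v - σ(a v)·D u` is a `σ`-derivation defined
on all of `A`, and `G w = σ(v)σ(u)·D w` for `w ∈ I`. Pairing `G` with a functional `λ` on `E`
gives a `σ`-derivation `A → A*`, which is `σ`-inner by weak amenability, hence zero because `A`
is commutative. So `A σ(I) σ(I)` annihilates `D(I)`, and expanding `D((ab)(cd))` by the Leibniz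
rule produces only such terms.
-/

section

variable {A E : Type*} [NonUnitalNormedRing A] [NormedSpace ℂ A]
  [NormedAddCommGroup E] [NormedSpace ℂ E]

noncomputable def mulRightCLM [IsScalarTower ℂ A A] (c : A) : A →L[ℂ] A :=
  ⟨LinearMap.mulRight ℂ c, continuous_mul_const c⟩

def IsSigmaDerivation (σ : A →L[ℂ] A) (m : A →L[ℂ] E →L[ℂ] E) {I : Submodule ℂ A}
    (hI : ∀ a b : A, b ∈ I → a * b ∈ I) (D : I →L[ℂ] E) : Prop :=
  ∀ x y : I, D ⟨x * y, hI x y y.2⟩ = m (σ y) (D x) + m (σ x) (D y)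

theorem IsSigmaDerivation.apply_of_eq {σ : A →L[ℂ] A} {m : A →L[ℂ] E →L[ℂ] E}
    {I : Submodule ℂ A} {hI : ∀ a b : A, b ∈ I → a * b ∈ I} {D : I →L[ℂ] E}
    (hD : IsSigmaDerivation σ m hI D)
    (p q : I) {z : A} (hz : z ∈ I) (h : z = p * q) :
    D ⟨z, hz⟩ = m (σ q) (D p) + m (σ p) (D q) := by
  subst h
  exact hD p q

end

section

variable {A E : Type*} [NonUnitalNormedCommRing A] [NormedSpace ℂ A]
  [NormedAddCommGroup E] [NormedSpace ℂ E]

theorem SigmaWeaklyAmenable.apply_derivation_eq_zero {σ : A → A}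
    (hwa : SigmaWeaklyAmenable A σ)
    (m : A →L[ℂ] E →L[ℂ] E) (hm : ∀ a b x, m (a * b) x = m a (m b x))
    (G : A →L[ℂ] E) (hG : ∀ a b, G (a * b) = m (σ b) (G a) + m (σ a) (G b)) (y a : A) :
    m y (G a) = 0 := by
  refine SeparatingDual.eq_zero_of_forall_dual_eq_zero (R := ℂ) fun lam => ?_
  let Φ : A →L[ℂ] A →L[ℂ] ℂ :=
    (ContinuousLinearMap.compL ℂ A E ℂ lam).comp (m.flip.comp G)
  have hΦ : ∀ p q, Φ p q = lam (m q (G p)) := fun _ _ => rfl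
  obtain ⟨Λ, hΛ⟩ := hwa Φ fun p q x => by
    rw [hΦ, hΦ, hΦ, hG, map_add, ← hm, ← hm, mul_comm x (σ q), map_add]
  simpa [hΦ, mul_comm y (σ a)] using hΛ a y

variable [IsScalarTower ℂ A A]

variable (σ : A →L[ℂ] A) (m : A →L[ℂ] E →L[ℂ] E) {I : Submodule ℂ A}
  (hI : ∀ a b : A, b ∈ I → a * b ∈ I) (D : I →L[ℂ] E)

noncomputable def productDerivation (u v : I) : A →L[ℂ] E :=
  D.comp ((mulRightCLM ((u : A) * v)).codRestrict I fun a => hI a _ (hI u v v.2))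
    - (m.flip (D v)).comp (σ.comp (mulRightCLM u))
    - (m.flip (D u)).comp (σ.comp (mulRightCLM v))

theorem productDerivation_apply (u v : I) (a : A) :
    productDerivation σ m hI D u v a =
      D ⟨a * (u * v), hI a _ (hI u v v.2)⟩ - m (σ (a * u)) (D v) - m (σ (a * v)) (D u) :=
  rfl

variable {σ m hI D}

theorem productDerivation_apply_eq_left (hD : IsSigmaDerivation σ m hI D)
    (u v : I) (a : A) :
    productDerivation σ m hI D u v a =
      m (σ v) (D ⟨a * u, hI a u u.2⟩) - m (σ (a * v)) (D u) := by
  rw [productDerivation_apply,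
    hD.apply_of_eq ⟨a * u, hI a u u.2⟩ v _ (mul_assoc a u v).symm]
  abel

theorem productDerivation_apply_eq_right (hD : IsSigmaDerivation σ m hI D)
    (u v : I) (a : A) :
    productDerivation σ m hI D u v a =
      m (σ u) (D ⟨a * v, hI a v v.2⟩) - m (σ (a * u)) (D v) := by
  rw [productDerivation_apply, hD.apply_of_eq ⟨a * v, hI a v v.2⟩ u _
    (by rw [mul_assoc, mul_comm (v : A)])]
  abel

theorem productDerivation_map_mul (hσ : ∀ a b : A, σ (a * b) = σ a * σ b)
    (hm : ∀ a b x, m (a * b) x = m a (m b x)) (hD : IsSigmaDerivation σ m hI D)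
    (u v : I) (a b : A) :
    productDerivation σ m hI D u v (a * b) =
      m (σ b) (productDerivation σ m hI D u v a)
        + m (σ a) (productDerivation σ m hI D u v b) := by
  have hsplit : D ⟨a * b * (u * v), hI _ _ (hI u v v.2)⟩ =
      m (σ (b * v)) (D ⟨a * u, hI a u u.2⟩) + m (σ (a * u)) (D ⟨b * v, hI b v v.2⟩) :=
    hD.apply_of_eq ⟨a * u, hI a u u.2⟩ ⟨b * v, hI b v v.2⟩ _
      (by simp only [mul_assoc, mul_left_comm (u : A) b])
  have hbav : a * b * v = b * (a * v) := by rw [← mul_assoc, mul_comm a b]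
  rw [productDerivation_apply, hsplit, hbav, productDerivation_apply_eq_left hD u v a,
    productDerivation_apply_eq_right hD u v b]
  simp only [map_sub, hσ, hm]
  abel

theorem productDerivation_apply_of_mem (hσ : ∀ a b : A, σ (a * b) = σ a * σ b)
    (hm : ∀ a b x, m (a * b) x = m a (m b x)) (hD : IsSigmaDerivation σ m hI D)
    (u v w : I) :
    productDerivation σ m hI D u v w = m (σ v) (m (σ u) (D w)) := by
  rw [productDerivation_apply_eq_left hD, hD w u, map_add, hσ, mul_comm (σ w), hm]
  abel

theorem act_act_act_derivation_eq_zero (hwa : SigmaWeaklyAmenable A σ)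
    (hσ : ∀ a b : A, σ (a * b) = σ a * σ b) (hm : ∀ a b x, m (a * b) x = m a (m b x))
    (hD : IsSigmaDerivation σ m hI D)
    (y : A) (u v w : I) :
    m y (m (σ v) (m (σ u) (D w))) = 0 := by
  rw [← productDerivation_apply_of_mem hσ hm hD]
  exact hwa.apply_derivation_eq_zero m hm _ (productDerivation_map_mul hσ hm hD u v) y w

theorem derivation_apply_mul_mul_mul_eq_zero (hwa : SigmaWeaklyAmenable A σ)
    (hσ : ∀ a b : A, σ (a * b) = σ a * σ b) (hm : ∀ a b x, m (a * b) x = m a (m b x))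
    (hD : IsSigmaDerivation σ m hI D)
    (a b c d : I) :
    D ⟨a * b * c * d, hI _ _ d.2⟩ = 0 := by
  have hab : (a : A) * b ∈ I := hI _ _ b.2
  have hcd : (c : A) * d ∈ I := hI _ _ d.2
  rw [hD.apply_of_eq ⟨_, hab⟩ ⟨_, hcd⟩ _ (mul_assoc _ _ _), hD a b, hD c d]
  simp only [map_add, hσ, hm, act_act_act_derivation_eq_zero hwa hσ hm hD, add_zero]

end

theorem stmt15_general {A : Type u} [NonUnitalNormedRing A] [NormedSpace ℂ A]
    [IsScalarTower ℂ A A]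
    (hcomm : ∀ a b : A, a * b = b * a)
    (σ : A →L[ℂ] A) (hσ : ∀ a b : A, σ (a * b) = σ a * σ b)
    (hwa : SigmaWeaklyAmenable A σ)
    (I : Submodule ℂ A)
    (hI : ∀ a b : A, b ∈ I → a * b ∈ I)
    (E : Type u) [NormedAddCommGroup E] [NormedSpace ℂ E]
    (m : A →L[ℂ] E →L[ℂ] E) (hm : ∀ a b x, m (a * b) x = m a (m b x))
    (D : I →L[ℂ] E)
    (hD : ∀ x y : I, D ⟨(x : A) * (y : A), hI (x : A) (y : A) y.2⟩
      = m (σ (y : A)) (D x) + m (σ (x : A)) (D y)) :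
    ∀ x : I, (x : A) ∈ Submodule.span ℂ
        {z : A | ∃ a ∈ I, ∃ b ∈ I, ∃ c ∈ I, ∃ d ∈ I, z = a * b * c * d} →
      D x = 0 := by
  let : NonUnitalNormedCommRing A := { ‹NonUnitalNormedRing A› with mul_comm := hcomm }
  intro x hx
  obtain ⟨w, hw, hwx⟩ : (x : A) ∈ (LinearMap.ker (D : I →ₗ[ℂ] E)).map I.subtype := by
    refine Submodule.span_le.mpr ?_ hx
    rintro _ ⟨a, ha, b, hb, c, hc, d, hd, rfl⟩
    exact ⟨_, derivation_apply_mul_mul_mul_eq_zero (hI := hI) hwa hσ hm hD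
      ⟨a, ha⟩ ⟨b, hb⟩ ⟨c, hc⟩ ⟨d, hd⟩, rfl⟩
  rwa [← Subtype.ext hwx]

/-- let `A` be a `σ`-weakly amenable commutative Banach algebra,
`I` a closed ideal of `A`, `E` a Banach `A`-module (action `m`), and
`σ ∈ Hom(A)` with dense range and `σ(I) ⊆ I`. Then every `σ`-derivation
`D : I → E` vanishes on `I⁴`. -/
theorem stmt15 {A : Type u} [NonUnitalNormedRing A] [NormedSpace ℂ A]
    [IsScalarTower ℂ A A] [SMulCommClass ℂ A A] [CompleteSpace A]
    (hcomm : ∀ a b : A, a * b = b * a)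
    (σ : A →L[ℂ] A) (hσ : ∀ a b : A, σ (a * b) = σ a * σ b)
    (hdense : DenseRange σ) (hwa : SigmaWeaklyAmenable A σ)
    (I : Submodule ℂ A) (hIc : IsClosed (I : Set A))
    (hI : ∀ a b : A, b ∈ I → a * b ∈ I)
    (hσI : ∀ a ∈ I, σ a ∈ I)
    (E : Type u) [NormedAddCommGroup E] [NormedSpace ℂ E] [CompleteSpace E]
    (m : A →L[ℂ] E →L[ℂ] E) (hm : ∀ a b x, m (a * b) x = m a (m b x))
    (D : I →L[ℂ] E)
    (hD : ∀ x y : I, D ⟨(x : A) * (y : A), hI (x : A) (y : A) y.2⟩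
      = m (σ (y : A)) (D x) + m (σ (x : A)) (D y)) :
    ∀ x : I, (x : A) ∈ Submodule.span ℂ
        {z : A | ∃ a ∈ I, ∃ b ∈ I, ∃ c ∈ I, ∃ d ∈ I, z = a * b * c * d} →
      D x = 0 :=
  stmt15_general hcomm σ hσ hwa I hI E m hm D hD
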